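/- arXiv:2303.13362 — 3 statements merged into one kernel-verified Lean document; each statement's English description precedes it below -/
import Mathlib

section
/- For every integer q ≥ 2, q/φ(q) ≤ exp(1 + ∑_{p ∣ q} 1/p), where the sum is over the distinct prime divisors of q and φ is Euler's totient function. -/
open Finset

lemma telescope_sum (n : ℕ) :
    ∑ k ∈ Finset.range n, ((1 : ℝ) / (k + 1) - 1 / (k + 2)) = 1 - 1 / (n + 1) := by
  induction n with
  | zero => simp
  | succ n ih =>
    rw [Finset.sum_range_succ, ih]
    push_cast
    ring

theorem totient_ratio_le_exp (q : ℕ) (hq : 2 ≤ q) :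
    (q : ℝ) / (Nat.totient q : ℝ) ≤
      Real.exp (1 + ∑ p ∈ q.primeFactors, (1 : ℝ) / p) := by
  have hq0 : q ≠ 0 := by omega
  have hprime : ∀ p ∈ q.primeFactors, p.Prime := fun p hp => Nat.prime_of_mem_primeFactors hp
  -- ratio as product
  have hform : (q : ℝ) / (Nat.totient q : ℝ) =
      ∏ p ∈ q.primeFactors, (p : ℝ) / (p - 1) := by
    have h := Nat.totient_mul_prod_primeFactors q
    have hcast : ((Nat.totient q : ℝ)) * ∏ p ∈ q.primeFactors, (p : ℝ)
        = (q : ℝ) * ∏ p ∈ q.primeFactors, ((p : ℝ) - 1) := by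
      have hc2 : ∏ p ∈ q.primeFactors, ((p : ℝ) - 1)
          = ∏ p ∈ q.primeFactors, (((p - 1 : ℕ)) : ℝ) := by
        apply Finset.prod_congr rfl
        intro p hp
        have h2 := (hprime p hp).two_le
        rw [Nat.cast_sub (by omega : 1 ≤ p), Nat.cast_one]
      rw [hc2, ← Nat.cast_prod, ← Nat.cast_prod, ← Nat.cast_mul, ← Nat.cast_mul, h]
    have htpos : (0 : ℝ) < (Nat.totient q : ℝ) := by
      exact_mod_cast Nat.totient_pos.2 (by omega)
    have hppos : ∀ p ∈ q.primeFactors, (0 : ℝ) < (p : ℝ) - 1 := by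
      intro p hp
      have := (hprime p hp).two_le
      have : (2 : ℝ) ≤ p := by exact_mod_cast this
      linarith
    rw [Finset.prod_div_distrib,
      div_eq_div_iff (ne_of_gt htpos) (ne_of_gt (Finset.prod_pos hppos))]
    linarith [hcast]
  rw [hform]
  -- pointwise bound: p/(p-1) ≤ exp (1/(p-1))
  have hpt : ∀ p ∈ q.primeFactors, (p : ℝ) / (p - 1) ≤ Real.exp (1 / ((p : ℝ) - 1)) := by
    intro p hp
    have h2 : (2 : ℝ) ≤ p := by exact_mod_cast (hprime p hp).two_le
    have hpos : (0 : ℝ) < (p : ℝ) - 1 := by linarith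
    have : (p : ℝ) / (p - 1) = 1 / ((p : ℝ) - 1) + 1 := by field_simp; ring
    rw [this]
    exact Real.add_one_le_exp _
  calc ∏ p ∈ q.primeFactors, (p : ℝ) / (p - 1)
      ≤ ∏ p ∈ q.primeFactors, Real.exp (1 / ((p : ℝ) - 1)) := by
        apply Finset.prod_le_prod
        · intro p hp
          have h2 : (2 : ℝ) ≤ p := by exact_mod_cast (hprime p hp).two_le
          exact div_nonneg (by linarith) (by linarith)
        · exact hpt
    _ = Real.exp (∑ p ∈ q.primeFactors, 1 / ((p : ℝ) - 1)) := by
        rw [Real.exp_sum]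
    _ ≤ Real.exp (1 + ∑ p ∈ q.primeFactors, (1 : ℝ) / p) := by
        apply Real.exp_le_exp.2
        have hsplit : ∀ p ∈ q.primeFactors,
            (1 : ℝ) / ((p : ℝ) - 1) = 1 / p + (1 / ((p : ℝ) - 1) - 1 / p) := by
          intro p hp; ring
        rw [Finset.sum_congr rfl hsplit, Finset.sum_add_distrib, add_comm]
        gcongr ?_ + _
        -- ∑ (1/(p-1) - 1/p) ≤ 1
        have hsub : q.primeFactors ⊆ Finset.Icc 2 q := by
          intro p hp
          rw [Finset.mem_Icc]
          exact ⟨(hprime p hp).two_le, Nat.le_of_dvd (by omega) (Nat.dvd_of_mem_primeFactors hp)⟩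
        have hnn : ∀ n ∈ Finset.Icc 2 q, (0:ℝ) ≤ 1 / ((n : ℝ) - 1) - 1 / n := by
          intro n hn
          rw [Finset.mem_Icc] at hn
          have h2 : (2 : ℝ) ≤ n := by exact_mod_cast hn.1
          rw [sub_nonneg]
          apply div_le_div_of_nonneg_left <;> linarith
        calc ∑ p ∈ q.primeFactors, ((1:ℝ) / ((p : ℝ) - 1) - 1 / p)
            ≤ ∑ n ∈ Finset.Icc 2 q, ((1:ℝ) / ((n : ℝ) - 1) - 1 / n) :=
              Finset.sum_le_sum_of_subset_of_nonneg hsub (fun n hn _ => hnn n hn)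
          _ ≤ 1 := by
              have : Finset.Icc 2 q = (Finset.range (q - 1)).map
                  ⟨fun k => k + 2, add_left_injective 2⟩ := by
                ext n
                simp only [Finset.mem_Icc, Finset.mem_map, Finset.mem_range,
                  Function.Embedding.coeFn_mk]
                constructor
                · rintro ⟨h1, h2⟩; exact ⟨n - 2, by omega, by omega⟩
                · rintro ⟨k, hk, h⟩
                  omega
              rw [this, Finset.sum_map]
              simp only [Function.Embedding.coeFn_mk]
              have heq : ∀ k ∈ Finset.range (q - 1),
                  (1:ℝ) / (((k + 2 : ℕ) : ℝ) - 1) - 1 / ((k + 2 : ℕ) : ℝ)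
                    = 1 / (k + 1) - 1 / (k + 2) := by
                intro k _; push_cast; ring_nf
              rw [Finset.sum_congr rfl heq, telescope_sum]
              have : (0:ℝ) < ((q - 1 : ℕ) : ℝ) + 1 := by positivity
              have h1 : (0:ℝ) ≤ 1 / (((q - 1 : ℕ) : ℝ) + 1) := by positivity
              linarith
end

section
/- For fixed k ≥ 2 there is a constant C such that for all real x ≥ 1, ∑_{m k-full, m > x} 1/m ≤ C · x^{1/k − 1}, where the sum is over k-full integers m exceeding x. -/
/-- A positive integer `m` is `k`-full if every prime dividing `m` does so
to the `k`-th power at least. -/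
def IsKFull (k m : ℕ) : Prop := 0 < m ∧ ∀ p : ℕ, p.Prime → p ∣ m → p ^ k ∣ m

open Finset ENNReal

open Finset in
lemma factorization_prod_pow (s : Finset ℕ) (hs : ∀ p ∈ s, p.Prime) (c : ℕ → ℕ) (q : ℕ) :
    (∏ p ∈ s, p ^ c p).factorization q = if q ∈ s then c q else 0 := by
  have hne : ∀ p ∈ s, p ^ c p ≠ 0 := fun p hp => pow_ne_zero _ (hs p hp).pos.ne'
  rw [Nat.factorization_prod hne, Finset.sum_apply']
  have : ∀ p ∈ s, (p ^ c p).factorization q = if p = q then c q else 0 := by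
    intro p hp
    rw [(hs p hp).factorization_pow, Finsupp.single_apply]
    split <;> simp_all
  rw [Finset.sum_congr rfl this, Finset.sum_ite_eq' s q (fun _ => c q)]

lemma decomp (k : ℕ) (hk : 2 ≤ k) (m : ℕ) (hm : IsKFull k m) :
    ∃ a : ℕ, ∃ b : Fin (k-1) → ℕ,
      m = a ^ k * ∏ i : Fin (k-1), (b i) ^ (k + 1 + (i:ℕ)) := by
  obtain ⟨hm0, hdvd⟩ := hm
  set s := m.primeFactors with hs
  have hsp : ∀ p ∈ s, p.Prime := fun p hp => Nat.prime_of_mem_primeFactors hp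
  set f := m.factorization with hf
  refine ⟨∏ p ∈ s, p ^ (f p / k - 1 + if f p % k = 0 then 1 else 0),
    fun i => ∏ p ∈ s.filter (fun p => f p % k = (i:ℕ)+1), p, ?_⟩
  have hA : 0 < ∏ p ∈ s, p ^ (f p / k - 1 + if f p % k = 0 then 1 else 0) :=
    Finset.prod_pos (fun p hp => pow_pos (hsp p hp).pos _)
  have hB : ∀ i : Fin (k-1), 0 < ∏ p ∈ s.filter (fun p => f p % k = (i:ℕ)+1), p :=
    fun i => Finset.prod_pos (fun p hp => (hsp p (Finset.mem_filter.1 hp).1).pos)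
  have hb : ∀ i : Fin (k-1), ∀ q : ℕ,
      ((∏ p ∈ s.filter (fun p => f p % k = (i:ℕ)+1), p) ^ (k+1+(i:ℕ))).factorization q
        = (k+1+(i:ℕ)) * (if q ∈ s ∧ f q % k = (i:ℕ)+1 then 1 else 0) := by
    intro i q
    have h1 := factorization_prod_pow (s.filter (fun p => f p % k = (i:ℕ)+1))
      (fun p hp => hsp p (Finset.mem_filter.1 hp).1) (fun _ => 1) q
    simp only [pow_one] at h1
    simp only [Nat.factorization_pow, Finsupp.smul_apply, h1, smul_eq_mul, Finset.mem_filter]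
  apply Nat.eq_of_factorization_eq hm0.ne'
  · exact Nat.mul_ne_zero (pow_ne_zero _ hA.ne') (Finset.prod_ne_zero_iff.2
      (fun i _ => pow_ne_zero _ (hB i).ne'))
  intro q
  rw [Nat.factorization_mul (pow_ne_zero _ hA.ne')
      (Finset.prod_ne_zero_iff.2 (fun i _ => pow_ne_zero _ (hB i).ne')),
    Nat.factorization_pow]
  rw [Finsupp.add_apply, Finsupp.smul_apply, smul_eq_mul]
  rw [factorization_prod_pow s hsp _ q]
  rw [Nat.factorization_prod (fun i _ => pow_ne_zero _ (hB i).ne'), Finset.sum_apply']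
  rw [Finset.sum_congr rfl (fun i _ => hb i q)]
  show f q = _
  by_cases hq : q ∈ s
  · have hfk : k ≤ f q := by
      have hpp := hsp q hq
      exact (Nat.Prime.pow_dvd_iff_le_factorization hpp hm0.ne').1
        (hdvd q hpp (Nat.dvd_of_mem_primeFactors hq))
    have hsum : ∑ i : Fin (k-1), (k+1+(i:ℕ)) * (if q ∈ s ∧ f q % k = (i:ℕ)+1 then 1 else 0)
        = if f q % k = 0 then 0 else k + f q % k := by
      rw [Fin.sum_univ_eq_sum_range (fun j => (k+1+j) * (if q ∈ s ∧ f q % k = j+1 then 1 else 0))]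
      by_cases h0 : f q % k = 0
      · rw [if_pos h0, Finset.sum_eq_zero]
        intro j hj
        have hc : ¬(q ∈ s ∧ f q % k = j + 1) := fun h => by omega
        rw [if_neg hc, mul_zero]
      · rw [if_neg h0]
        have hlt : f q % k - 1 ∈ Finset.range (k-1) := Finset.mem_range.2
          (by have := Nat.mod_lt (f q) (show 0 < k by omega); omega)
        rw [Finset.sum_eq_single_of_mem _ hlt (fun j hj hne => by
          have hc : ¬(q ∈ s ∧ f q % k = j+1) := fun h => hne (by omega)
          rw [if_neg hc, mul_zero])]
        have hc : q ∈ s ∧ f q % k = (f q % k - 1) + 1 := ⟨hq, by omega⟩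
        rw [if_pos hc, mul_one]
        omega
    rw [hsum, if_pos hq]
    have hdm := Nat.div_add_mod (f q) k
    have h1 : 1 ≤ f q / k := (Nat.one_le_div_iff (by omega)).2 hfk
    obtain ⟨t, ht⟩ : ∃ t, f q / k = t + 1 := ⟨f q / k - 1, by omega⟩
    rw [ht] at hdm ⊢
    rw [Nat.mul_add] at hdm
    by_cases h0 : f q % k = 0
    · rw [if_pos h0, if_pos h0]
      have : t + 1 - 1 + 1 = t + 1 := by omega
      rw [this, Nat.mul_add]
      generalize k * t = u at hdm ⊢
      omega
    · rw [if_neg h0, if_neg h0]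
      have : t + 1 - 1 + 0 = t := by omega
      rw [this]
      generalize k * t = u at hdm ⊢
      omega
  · have hfq : f q = 0 := by
      rw [hf]
      by_cases hqp : q.Prime
      · exact Nat.factorization_eq_zero_of_not_dvd
          (fun h => hq (Nat.mem_primeFactors.2 ⟨hqp, h, hm0.ne'⟩))
      · exact Nat.factorization_eq_zero_of_not_prime _ hqp
    rw [if_neg hq, Finset.sum_eq_zero (fun i _ => by
      have hc : ¬(q ∈ s ∧ f q % k = (i:ℕ)+1) := fun h => hq h.1
      rw [if_neg hc, mul_zero]), hfq]
    simp

lemma sum_Icc_inv_sq (n : ℕ) (hn : 1 ≤ n) (N : ℕ) :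
    ∑ a ∈ Finset.Icc n N, ((a:ℝ)^2)⁻¹ ≤ 2/n := by
  suffices h : ∀ M : ℕ, ∑ a ∈ Finset.Icc n (n - 1 + M), ((a:ℝ)^2)⁻¹
      ≤ 2/(n:ℝ) - 2/((n+M:ℕ):ℝ) by
    rcases lt_or_ge N n with hN | hN
    · rw [Finset.Icc_eq_empty (by omega), Finset.sum_empty]
      positivity
    · have h2 := h (N - (n-1))
      rw [show n - 1 + (N - (n-1)) = N by omega] at h2
      have h3 : (0:ℝ) ≤ 2/((n + (N - (n-1)):ℕ):ℝ) := by positivity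
      linarith
  intro M
  induction M with
  | zero =>
    rw [Finset.Icc_eq_empty (by omega), Finset.sum_empty]
    simp
  | succ M ih =>
    rw [show n - 1 + (M+1) = (n-1+M)+1 from rfl, Finset.sum_Icc_succ_top (by omega)]
    rw [show (n-1+M)+1 = n+M by omega]
    have ht : (1:ℝ) ≤ ((n+M:ℕ):ℝ) := by exact_mod_cast Nat.le_add_right_of_le hn
    have ht0 : (0:ℝ) < ((n+M:ℕ):ℝ) := by linarith
    have hstep : ((((n+M:ℕ)):ℝ)^2)⁻¹ ≤ 2/((n+M:ℕ):ℝ) - 2/((n+(M+1):ℕ):ℝ) := by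
      have hcast : ((n+(M+1):ℕ):ℝ) = ((n+M:ℕ):ℝ) + 1 := by push_cast; ring
      rw [hcast]
      set t := ((n+M:ℕ):ℝ)
      have h2 : 2/t - 2/(t+1) = 2/(t*(t+1)) := by field_simp; ring
      rw [h2, inv_eq_one_div, div_le_div_iff₀ (by positivity) (by positivity)]
      nlinarith
    linarith

lemma tsum_tail_sq (n : ℕ) (hn : 1 ≤ n) :
    ∑' a : ℕ, (if n ≤ a then ((a:ℝ≥0∞)^2)⁻¹ else 0) ≤ ENNReal.ofReal (2/n) := by
  rw [ENNReal.tsum_eq_iSup_sum]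
  apply iSup_le
  intro s
  have hconv : ∀ a ∈ s.filter (fun a => n ≤ a),
      (((a:ℝ≥0∞))^2)⁻¹ = ENNReal.ofReal (((a:ℝ)^2)⁻¹) := by
    intro a ha
    have ha1 : 1 ≤ a := le_trans hn (Finset.mem_filter.1 ha).2
    rw [← ENNReal.ofReal_natCast a, ← ENNReal.ofReal_pow (by positivity),
      ← ENNReal.ofReal_inv_of_pos (by positivity)]
  calc ∑ a ∈ s, (if n ≤ a then ((a:ℝ≥0∞)^2)⁻¹ else 0)
      = ∑ a ∈ s.filter (fun a => n ≤ a), ((a:ℝ≥0∞)^2)⁻¹ := by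
        rw [Finset.sum_filter]
    _ = ∑ a ∈ s.filter (fun a => n ≤ a), ENNReal.ofReal (((a:ℝ)^2)⁻¹) :=
        Finset.sum_congr rfl hconv
    _ = ENNReal.ofReal (∑ a ∈ s.filter (fun a => n ≤ a), ((a:ℝ)^2)⁻¹) := by
        rw [ENNReal.ofReal_sum_of_nonneg (fun a _ => by positivity)]
    _ ≤ ENNReal.ofReal (2/n) := by
        apply ENNReal.ofReal_le_ofReal
        calc ∑ a ∈ s.filter (fun a => n ≤ a), ((a:ℝ)^2)⁻¹
            ≤ ∑ a ∈ Finset.Icc n (s.sup id), ((a:ℝ)^2)⁻¹ := by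
              apply Finset.sum_le_sum_of_subset_of_nonneg
              · intro a ha
                rw [Finset.mem_Icc]
                exact ⟨(Finset.mem_filter.1 ha).2, Finset.le_sup (f := id) (Finset.mem_filter.1 ha).1⟩
              · intro a _ _; positivity
          _ ≤ 2/n := sum_Icc_inv_sq n hn _

lemma tsum_tail_pow (k n : ℕ) (hk : 2 ≤ k) (hn : 1 ≤ n) :
    ∑' a : ℕ, (if n ≤ a then ((a:ℝ≥0∞)^k)⁻¹ else 0)
      ≤ ENNReal.ofReal (2/(n:ℝ)^(k-1)) := by
  have key : ∀ a : ℕ, (if n ≤ a then ((a:ℝ≥0∞)^k)⁻¹ else 0)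
      ≤ ((n:ℝ≥0∞)^(k-2))⁻¹ * (if n ≤ a then ((a:ℝ≥0∞)^2)⁻¹ else 0) := by
    intro a
    split
    · next h =>
      have hn0 : (n:ℝ≥0∞) ≠ 0 := Nat.cast_ne_zero.2 (by omega)
      rw [← ENNReal.mul_inv (Or.inl (pow_ne_zero _ hn0))
        (Or.inl (ENNReal.pow_ne_top (ENNReal.natCast_ne_top n)))]
      apply ENNReal.inv_le_inv.2
      rw [show k = (k-2)+2 by omega, pow_add]
      exact mul_le_mul_left (pow_le_pow_left' (Nat.cast_le.2 h) _) _
    · simp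
  calc ∑' a : ℕ, (if n ≤ a then ((a:ℝ≥0∞)^k)⁻¹ else 0)
      ≤ ∑' a : ℕ, ((n:ℝ≥0∞)^(k-2))⁻¹ * (if n ≤ a then ((a:ℝ≥0∞)^2)⁻¹ else 0) :=
        ENNReal.tsum_le_tsum key
    _ = ((n:ℝ≥0∞)^(k-2))⁻¹ * ∑' a : ℕ, (if n ≤ a then ((a:ℝ≥0∞)^2)⁻¹ else 0) :=
        ENNReal.tsum_mul_left
    _ ≤ ((n:ℝ≥0∞)^(k-2))⁻¹ * ENNReal.ofReal (2/n) :=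
        mul_le_mul_right (tsum_tail_sq n hn) _
    _ = ENNReal.ofReal (2/(n:ℝ)^(k-1)) := by
        have h1 : ((n:ℝ≥0∞)^(k-2))⁻¹ = ENNReal.ofReal (((n:ℝ)^(k-2))⁻¹) := by
          rw [← ENNReal.ofReal_natCast n, ← ENNReal.ofReal_pow (by positivity),
            ← ENNReal.ofReal_inv_of_pos (by positivity)]
        rw [h1, ← ENNReal.ofReal_mul (by positivity)]
        congr 1
        have hn0 : (0:ℝ) < n := by exact_mod_cast hn
        rw [show k - 1 = (k-2)+1 by omega, pow_succ]
        field_simp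

lemma real_key (k : ℕ) (hk : 2 ≤ k) (x : ℝ) (hx : 1 ≤ x) (B : ℕ) (hB : 1 ≤ B)
    (n : ℕ) (hn1 : 1 ≤ n) (hny : (x/(B:ℝ))^((1:ℝ)/k) ≤ (n:ℝ)) :
    (B:ℝ)⁻¹ * (2/(n:ℝ)^(k-1)) ≤ 2 * (x^((1:ℝ)/k - 1) * (B:ℝ)^(-(1:ℝ)/k)) := by
  have hB0 : (0:ℝ) < B := by exact_mod_cast hB
  have hx0 : (0:ℝ) < x := by linarith
  have hn0 : (0:ℝ) < (n:ℝ) := by exact_mod_cast hn1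
  have hk0 : (0:ℝ) < k := by positivity
  have hk1 : (1:ℝ)/k ≤ 1 := by
    rw [div_le_one hk0]; exact_mod_cast le_trans (by norm_num) hk
  have main : (B:ℝ)⁻¹ * ((n:ℝ)^(k-1))⁻¹ ≤ x^((1:ℝ)/k - 1) * (B:ℝ)^(-(1:ℝ)/k) := by
    rcases le_or_gt x (B:ℝ) with hcase | hcase
    · -- B ≥ x : LHS ≤ B⁻¹ ≤ x^{1/k-1} B^{-1/k}
      have h1 : ((n:ℝ)^(k-1))⁻¹ ≤ 1 := by
        rw [inv_le_one_iff₀]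
        right
        exact one_le_pow₀ (by exact_mod_cast hn1)
      have h2 : (B:ℝ)⁻¹ * ((n:ℝ)^(k-1))⁻¹ ≤ (B:ℝ)⁻¹ := by
        nlinarith [inv_pos.2 hB0]
      have h3 : (B:ℝ)^((1:ℝ)/k - 1) ≤ x^((1:ℝ)/k - 1) := by
        rw [show (1:ℝ)/k - 1 = -(1 - 1/k) by ring, Real.rpow_neg hx0.le, Real.rpow_neg hB0.le]
        exact inv_anti₀ (Real.rpow_pos_of_pos hx0 _)
          (Real.rpow_le_rpow hx0.le hcase (by linarith))
      have h4 : (B:ℝ)^((1:ℝ)/k - 1) * (B:ℝ)^(-(1:ℝ)/k) = (B:ℝ)⁻¹ := by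
        rw [← Real.rpow_add hB0, show (1:ℝ)/k - 1 + -(1:ℝ)/k = -1 by ring, Real.rpow_neg_one]
      calc (B:ℝ)⁻¹ * ((n:ℝ)^(k-1))⁻¹ ≤ (B:ℝ)⁻¹ := h2
        _ = (B:ℝ)^((1:ℝ)/k - 1) * (B:ℝ)^(-(1:ℝ)/k) := h4.symm
        _ ≤ x^((1:ℝ)/k - 1) * (B:ℝ)^(-(1:ℝ)/k) := by
            apply mul_le_mul_of_nonneg_right h3 (Real.rpow_nonneg hB0.le _)
    · -- B < x
      set y := (x/(B:ℝ))^((1:ℝ)/k) with hy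
      have hyB0 : 0 < x/(B:ℝ) := by positivity
      have hy0 : 0 < y := Real.rpow_pos_of_pos hyB0 _
      have hyk : y^(k-1) = (x/(B:ℝ))^(1 - (1:ℝ)/k) := by
        rw [hy, ← Real.rpow_natCast ((x/(B:ℝ))^((1:ℝ)/k)) (k-1), ← Real.rpow_mul hyB0.le]
        congr 1
        have : ((k-1:ℕ):ℝ) = (k:ℝ) - 1 := by
          push_cast [Nat.cast_sub (by omega : 1 ≤ k)]; ring
        rw [this]
        field_simp
      have hle : y^(k-1) ≤ (n:ℝ)^(k-1) := pow_le_pow_left₀ hy0.le hny _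
      have h2 : (B:ℝ)⁻¹ * ((n:ℝ)^(k-1))⁻¹ ≤ (B:ℝ)⁻¹ * (y^(k-1))⁻¹ := by
        apply mul_le_mul_of_nonneg_left _ (by positivity)
        exact inv_anti₀ (by positivity) hle
      have h3 : (B:ℝ)⁻¹ * (y^(k-1))⁻¹ = x^((1:ℝ)/k - 1) * (B:ℝ)^(-(1:ℝ)/k) := by
        rw [hyk, ← Real.rpow_neg hyB0.le, show -(1 - (1:ℝ)/k) = (1:ℝ)/k - 1 by ring,
          Real.div_rpow hx0.le hB0.le, ← Real.rpow_neg_one (B:ℝ)]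
        rw [div_eq_mul_inv, ← Real.rpow_neg hB0.le]
        rw [show (B:ℝ)^(-(1:ℝ)) * (x^((1:ℝ)/k-1) * (B:ℝ)^(-((1:ℝ)/k-1)))
            = x^((1:ℝ)/k-1) * ((B:ℝ)^(-((1:ℝ)/k-1)) * (B:ℝ)^(-(1:ℝ))) by ring,
          ← Real.rpow_add hB0]
        congr 1
        ring
      linarith
  calc (B:ℝ)⁻¹ * (2/(n:ℝ)^(k-1)) = 2*((B:ℝ)⁻¹ * ((n:ℝ)^(k-1))⁻¹) := by
        rw [div_eq_mul_inv]; ring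
    _ ≤ 2 * (x^((1:ℝ)/k - 1) * (B:ℝ)^(-(1:ℝ)/k)) :=
        mul_le_mul_of_nonneg_left main (by norm_num)

lemma kfull_inner_sum (k : ℕ) (hk : 2 ≤ k) (x : ℝ) (hx : 1 ≤ x) (B : ℕ) (hB : 1 ≤ B) :
    ∑' a : ℕ, (if x < ((a^k * B : ℕ):ℝ) then ((a^k * B : ℕ):ℝ≥0∞)⁻¹ else 0)
      ≤ ENNReal.ofReal (2 * (x^((1:ℝ)/k - 1) * (B:ℝ)^(-(1:ℝ)/k))) := by
  have hB0 : (0:ℝ) < B := by exact_mod_cast hB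
  have hx0 : (0:ℝ) < x := by linarith
  set y := (x/(B:ℝ))^((1:ℝ)/k) with hy
  have hy0 : 0 ≤ y := Real.rpow_nonneg (by positivity) _
  set n := ⌊y⌋₊ + 1 with hndef
  have hn1 : 1 ≤ n := Nat.le_add_left 1 _
  have hny : y ≤ (n:ℝ) := by
    have := (Nat.lt_floor_add_one y).le
    rw [hndef]; push_cast; exact this
  have termwise : ∀ a : ℕ, (if x < ((a^k * B : ℕ):ℝ) then ((a^k * B : ℕ):ℝ≥0∞)⁻¹ else 0)
      ≤ (B:ℝ≥0∞)⁻¹ * (if n ≤ a then ((a:ℝ≥0∞)^k)⁻¹ else 0) := by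
    intro a
    split
    · next h =>
      have ha1 : 1 ≤ a := by
        rcases Nat.eq_zero_or_pos a with h0 | h0
        · subst h0
          rw [zero_pow (by omega), zero_mul] at h
          norm_num at h; linarith
        · exact h0
      have hna : n ≤ a := by
        have hax : x/(B:ℝ) < (a:ℝ)^k := by
          rw [div_lt_iff₀ hB0]
          calc x < ((a^k * B : ℕ):ℝ) := h
            _ = (a:ℝ)^k * B := by push_cast; ring
        have hyk : y^k = x/(B:ℝ) := by
          rw [hy, ← Real.rpow_natCast ((x/(B:ℝ))^((1:ℝ)/k)) k, ← Real.rpow_mul (by positivity)]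
          rw [show (1:ℝ)/k * k = 1 by field_simp, Real.rpow_one]
        have hya : y < (a:ℝ) := by
          apply lt_of_pow_lt_pow_left₀ k (by positivity)
          rw [hyk]; exact hax
        have : ⌊y⌋₊ < a := (Nat.floor_lt hy0).2 hya
        omega
      rw [if_pos hna]
      have hcast : ((a^k * B : ℕ):ℝ≥0∞) = (a:ℝ≥0∞)^k * (B:ℝ≥0∞) := by push_cast; ring
      rw [hcast, ENNReal.mul_inv (Or.inl (pow_ne_zero _ (Nat.cast_ne_zero.2 (by omega))))
        (Or.inl (ENNReal.pow_ne_top (ENNReal.natCast_ne_top a))), mul_comm]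
    · simp
  calc ∑' a : ℕ, (if x < ((a^k * B : ℕ):ℝ) then ((a^k * B : ℕ):ℝ≥0∞)⁻¹ else 0)
      ≤ ∑' a : ℕ, (B:ℝ≥0∞)⁻¹ * (if n ≤ a then ((a:ℝ≥0∞)^k)⁻¹ else 0) :=
        ENNReal.tsum_le_tsum termwise
    _ = (B:ℝ≥0∞)⁻¹ * ∑' a : ℕ, (if n ≤ a then ((a:ℝ≥0∞)^k)⁻¹ else 0) := ENNReal.tsum_mul_left
    _ ≤ (B:ℝ≥0∞)⁻¹ * ENNReal.ofReal (2/(n:ℝ)^(k-1)) :=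
        mul_le_mul_right (tsum_tail_pow k n hk hn1) _
    _ = ENNReal.ofReal ((B:ℝ)⁻¹ * (2/(n:ℝ)^(k-1))) := by
        rw [← ENNReal.ofReal_natCast B, ← ENNReal.ofReal_inv_of_pos hB0,
          ← ENNReal.ofReal_mul (by positivity)]
    _ ≤ ENNReal.ofReal (2 * (x^((1:ℝ)/k - 1) * (B:ℝ)^(-(1:ℝ)/k))) :=
        ENNReal.ofReal_le_ofReal (real_key k hk x hx B hB n hn1 hny)

lemma pi_tsum (m : ℕ) (g : ℕ → ℝ≥0∞) :
    ∑' b : Fin m → ℕ, ∏ i, g (b i) = (∑' c : ℕ, g c) ^ m := by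
  induction m with
  | zero =>
    rw [tsum_eq_single Fin.elim0 (fun b hb => absurd (Subsingleton.elim b Fin.elim0) hb)]
    simp
  | succ m ih =>
    rw [← (Fin.consEquiv (fun _ : Fin (m+1) => ℕ)).tsum_eq]
    have he : ∀ p : ℕ × (Fin m → ℕ),
        ∏ i, g ((Fin.consEquiv (fun _ : Fin (m+1) => ℕ)) p i)
          = g p.1 * ∏ i : Fin m, g (p.2 i) := by
      intro p
      rw [Fin.prod_univ_succ]
      simp [Fin.consEquiv]
    rw [tsum_congr he, ENNReal.tsum_prod' (f := fun (b : ℕ × (Fin m → ℕ)) => g b.1 * ∏ i : Fin m, g (b.2 i))]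
    simp_rw [ENNReal.tsum_mul_left]
    rw [ENNReal.tsum_mul_right, ih, pow_succ]
    ring

noncomputable def gfun (k : ℕ) : ℕ → ℝ≥0∞ :=
  fun c => if c = 0 then 0 else ENNReal.ofReal ((c:ℝ)^(-(1+1/(k:ℝ))))

lemma outer_bound (k : ℕ) (hk : 2 ≤ k) (x : ℝ) (hx : 1 ≤ x) (b : Fin (k-1) → ℕ) :
    ∑' a : ℕ, (if x < ((a^k * ∏ i, (b i)^(k+1+(i:ℕ)) : ℕ):ℝ) then
        ((a^k * ∏ i, (b i)^(k+1+(i:ℕ)) : ℕ):ℝ≥0∞)⁻¹ else 0)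
      ≤ ENNReal.ofReal (2 * x^((1:ℝ)/k - 1)) * ∏ i, gfun k (b i) := by
  have hk0 : (0:ℝ) < k := by positivity
  set B := ∏ i, (b i)^(k+1+(i:ℕ)) with hBdef
  by_cases hB : B = 0
  · have hzero : ∀ a : ℕ, (if x < ((a^k * B : ℕ):ℝ) then ((a^k * B : ℕ):ℝ≥0∞)⁻¹ else 0) = 0 := by
      intro a
      rw [if_neg]
      rw [hB, Nat.mul_zero]
      norm_num
      linarith
    rw [tsum_congr hzero]
    simp
  · have hB1 : 1 ≤ B := Nat.one_le_iff_ne_zero.2 hB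
    have hbi : ∀ i, 1 ≤ b i := by
      intro i
      by_contra h
      exact hB (Finset.prod_eq_zero (Finset.mem_univ i) (by
        rw [show b i = 0 by omega]; exact zero_pow (by omega)))
    calc ∑' a : ℕ, (if x < ((a^k * B : ℕ):ℝ) then ((a^k * B : ℕ):ℝ≥0∞)⁻¹ else 0)
        ≤ ENNReal.ofReal (2 * (x^((1:ℝ)/k - 1) * (B:ℝ)^(-(1:ℝ)/k))) :=
          kfull_inner_sum k hk x hx B hB1
      _ = ENNReal.ofReal (2 * x^((1:ℝ)/k - 1)) * ENNReal.ofReal ((B:ℝ)^(-(1:ℝ)/k)) := by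
          rw [← ENNReal.ofReal_mul (by positivity)]
          ring_nf
      _ ≤ ENNReal.ofReal (2 * x^((1:ℝ)/k - 1)) * ∏ i, gfun k (b i) := by
          apply mul_le_mul_right
          have hreal : (B:ℝ)^(-(1:ℝ)/k) ≤ ∏ i, ((b i):ℝ)^(-(1+1/(k:ℝ))) := by
            have hcast : (B:ℝ) = ∏ i, ((b i):ℝ)^(k+1+(i:ℕ)) := by
              rw [hBdef]; push_cast; rfl
            rw [hcast, ← Real.finset_prod_rpow _ _ (fun i _ => by positivity)]
            apply Finset.prod_le_prod (fun i _ => by positivity)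
            intro i _
            have hb1 : (1:ℝ) ≤ (b i : ℝ) := by exact_mod_cast hbi i
            rw [← Real.rpow_natCast ((b i : ℝ)) (k+1+(i:ℕ)), ← Real.rpow_mul (by linarith)]
            apply Real.rpow_le_rpow_of_exponent_le hb1
            have hc0 : (0:ℝ) ≤ ((i:ℕ):ℝ) := by positivity
            have hcc : ((k+1+(i:ℕ):ℕ):ℝ) = (k:ℝ)+1+((i:ℕ):ℝ) := by push_cast; ring
            rw [hcc]
            have h1 : ((k:ℝ)+1)/k ≤ ((k:ℝ)+1+((i:ℕ):ℝ))/k :=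
              (div_le_div_iff_of_pos_right hk0).2 (by linarith)
            calc ((k:ℝ)+1+((i:ℕ):ℝ)) * (-1/k) = -(((k:ℝ)+1+((i:ℕ):ℝ))/k) := by ring
              _ ≤ -(((k:ℝ)+1)/k) := neg_le_neg h1
              _ = -(1+1/(k:ℝ)) := by rw [add_div, div_self hk0.ne']
          calc ENNReal.ofReal ((B:ℝ)^(-(1:ℝ)/k))
              ≤ ENNReal.ofReal (∏ i, ((b i):ℝ)^(-(1+1/(k:ℝ)))) := ENNReal.ofReal_le_ofReal hreal
            _ = ∏ i, ENNReal.ofReal (((b i):ℝ)^(-(1+1/(k:ℝ)))) :=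
                ENNReal.ofReal_prod_of_nonneg (fun i _ => by positivity)
            _ = ∏ i, gfun k (b i) := Finset.prod_congr rfl (fun i _ => by
                rw [gfun, if_neg (by have := hbi i; omega : ¬ b i = 0)])

theorem kfull_tail_sum_bound (k : ℕ) (hk : 2 ≤ k) :
    ∃ C : ℝ, 0 < C ∧ ∀ x : ℝ, 1 ≤ x →
      ∑' m : {m : ℕ // IsKFull k m ∧ x < (m : ℝ)}, (1 : ℝ) / ((m : ℕ) : ℝ) ≤
        C * x ^ ((1 : ℝ) / k - 1) := by
  have hk0 : (0:ℝ) < k := by positivity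
  -- Z is finite
  have hZ : (∑' c : ℕ, gfun k c) ≠ ⊤ := by
    have hexp : -(1+1/(k:ℝ)) < -1 := by
      have : 0 < 1/(k:ℝ) := by positivity
      linarith
    have hsum : Summable (fun c : ℕ => (c:ℝ)^(-(1+1/(k:ℝ)))) :=
      Real.summable_nat_rpow.2 hexp
    have hle : ∀ c : ℕ, gfun k c ≤ ENNReal.ofReal ((c:ℝ)^(-(1+1/(k:ℝ)))) := by
      intro c
      rw [gfun]
      split
      · exact zero_le
      · exact le_refl _
    refine ne_top_of_le_ne_top ?_ (ENNReal.tsum_le_tsum hle)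
    rw [← ENNReal.ofReal_tsum_of_nonneg (fun c => Real.rpow_nonneg (Nat.cast_nonneg c) _) hsum]
    exact ENNReal.ofReal_ne_top
  set W := (∑' c : ℕ, gfun k c)^(k-1) with hWdef
  have hWtop : W ≠ ⊤ := ENNReal.pow_ne_top hZ
  refine ⟨2 * W.toReal + 1, by positivity, ?_⟩
  intro x hx
  have hx0 : (0:ℝ) < x := by linarith
  have hxp : 0 < x^((1:ℝ)/k - 1) := Real.rpow_pos_of_pos hx0 _
  -- the ENNReal bound
  have EB : ∑' m : {m : ℕ // IsKFull k m ∧ x < (m : ℝ)}, (((m:ℕ):ℝ≥0∞))⁻¹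
      ≤ ENNReal.ofReal ((2 * W.toReal + 1) * x^((1:ℝ)/k - 1)) := by
    have hdec : ∀ m : {m : ℕ // IsKFull k m ∧ x < (m : ℝ)},
        ∃ q : (Fin (k-1) → ℕ) × ℕ,
          (m:ℕ) = q.2 ^ k * ∏ i, (q.1 i)^(k+1+(i:ℕ)) := by
      intro m
      obtain ⟨a, b, h⟩ := decomp k hk m m.2.1
      exact ⟨(b, a), h⟩
    choose ι hι using hdec
    have hinj : Function.Injective ι := by
      intro m m' h
      apply Subtype.ext
      rw [hι m, hι m', h]
    set G : (Fin (k-1) → ℕ) × ℕ → ℝ≥0∞ := fun q =>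
      if x < ((q.2 ^ k * ∏ i, (q.1 i)^(k+1+(i:ℕ)) : ℕ):ℝ) then
        ((q.2 ^ k * ∏ i, (q.1 i)^(k+1+(i:ℕ)) : ℕ):ℝ≥0∞)⁻¹ else 0 with hGdef
    have hGι : ∀ m : {m : ℕ // IsKFull k m ∧ x < (m : ℝ)},
        G (ι m) = (((m:ℕ):ℝ≥0∞))⁻¹ := by
      intro m
      rw [hGdef]
      simp only
      rw [← hι m, if_pos m.2.2]
    calc ∑' m : {m : ℕ // IsKFull k m ∧ x < (m : ℝ)}, (((m:ℕ):ℝ≥0∞))⁻¹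
        = ∑' m, G (ι m) := by rw [tsum_congr hGι]
      _ ≤ ∑' q, G q := tsum_comp_le_tsum_of_injective hinj G
      _ = ∑' b : Fin (k-1) → ℕ, ∑' a : ℕ, G (b, a) := ENNReal.tsum_prod' (f := G)
      _ ≤ ∑' b : Fin (k-1) → ℕ, ENNReal.ofReal (2 * x^((1:ℝ)/k - 1)) * ∏ i, gfun k (b i) :=
          ENNReal.tsum_le_tsum (fun b => outer_bound k hk x hx b)
      _ = ENNReal.ofReal (2 * x^((1:ℝ)/k - 1)) * ∑' b : Fin (k-1) → ℕ, ∏ i, gfun k (b i) :=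
          ENNReal.tsum_mul_left
      _ = ENNReal.ofReal (2 * x^((1:ℝ)/k - 1)) * W := by rw [pi_tsum, hWdef]
      _ = ENNReal.ofReal (2 * x^((1:ℝ)/k - 1) * W.toReal) := by
          conv_rhs => rw [ENNReal.ofReal_mul (show (0:ℝ) ≤ 2 * x^((1:ℝ)/k - 1) by positivity),
            ENNReal.ofReal_toReal hWtop]
      _ ≤ ENNReal.ofReal ((2 * W.toReal + 1) * x^((1:ℝ)/k - 1)) := by
          apply ENNReal.ofReal_le_ofReal
          nlinarith [ENNReal.toReal_nonneg (a := W)]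
  -- conclude over ℝ
  by_cases hsum : Summable (fun m : {m : ℕ // IsKFull k m ∧ x < (m : ℝ)} =>
      (1:ℝ) / ((m:ℕ):ℝ))
  · apply (ENNReal.ofReal_le_ofReal_iff (by positivity)).1
    rw [ENNReal.ofReal_tsum_of_nonneg (fun m => by positivity) hsum]
    have hconv : ∀ m : {m : ℕ // IsKFull k m ∧ x < (m : ℝ)},
        ENNReal.ofReal ((1:ℝ) / ((m:ℕ):ℝ)) = (((m:ℕ):ℝ≥0∞))⁻¹ := by
      intro m
      have hm0 : (0:ℝ) < ((m:ℕ):ℝ) := by exact_mod_cast m.2.1.1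
      rw [one_div, ENNReal.ofReal_inv_of_pos hm0, ENNReal.ofReal_natCast]
    rw [tsum_congr hconv]
    exact EB
  · rw [tsum_eq_zero_of_not_summable hsum]
    positivity
end

section
/- If a : ℕ → ℝ≥0 is a k-full kernel function (a(n) = a(k(n)) where k(n) is the k-full part of n) with a(n) ≤ C·n^ε, and |λ(n)| ≤ d(n), then for H ≥ 1, ∑_{n ≤ x, k(n) > H} a(n)·λ(n+1)⁴ = O(x^{1+5ε} H^{1/k − 1}). -/
open scoped Classical

/-- The `k`-full part of `n`: the product of the prime powers `p ^ (v_p n)`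
over primes `p` with `v_p n ≥ k`. -/
def kFullPart (k n : ℕ) : ℕ :=
  ∏ p ∈ n.primeFactors.filter (fun p => k ≤ n.factorization p), p ^ (n.factorization p)

lemma prod_pow_factorization_eq' (s : Finset ℕ) (hs : ∀ p ∈ s, p.Prime) (f : ℕ → ℕ) (q : ℕ) :
    (∏ p ∈ s, p ^ f p).factorization q = if q ∈ s then f q else 0 := by
  rw [Nat.factorization_prod (fun p hp => pow_ne_zero _ (hs p hp).pos.ne')]
  have h : ∀ p ∈ s, (p ^ f p).factorization = Finsupp.single p (f p) :=
    fun p hp => (hs p hp).factorization_pow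
  rw [Finset.sum_congr rfl h, Finsupp.finset_sum_apply]
  by_cases hq : q ∈ s
  · rw [if_pos hq, Finset.sum_eq_single q (fun p _ hpq => Finsupp.single_eq_of_ne' hpq)
      (fun h => absurd hq h)]
    exact Finsupp.single_eq_same
  · rw [if_neg hq]
    exact Finset.sum_eq_zero (fun p hp => Finsupp.single_eq_of_ne' (fun h => hq (h ▸ hp)))

lemma kFullPart_dvd (k n : ℕ) (hn : n ≠ 0) : kFullPart k n ∣ n := by
  have h2 : (∏ p ∈ n.primeFactors, p ^ (n.factorization p)) = n := by
    rw [Nat.prod_primeFactors_prod_factorization]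
    exact Nat.factorization_prod_pow_eq_self hn
  calc kFullPart k n
      ∣ (∏ p ∈ n.primeFactors, p ^ (n.factorization p)) :=
        Finset.prod_dvd_prod_of_subset _ _ _ (Finset.filter_subset _ _)
    _ = n := h2

lemma kFullPart_pos (k n : ℕ) : 0 < kFullPart k n :=
  Finset.prod_pos (fun p hp => pow_pos (Nat.prime_of_mem_primeFactors
    (Finset.mem_filter.mp hp).1).pos _)

lemma kFullPart_isKFull (k n : ℕ) (q : ℕ) (hq : q ∈ (kFullPart k n).primeFactors) :
    k ≤ (kFullPart k n).factorization q := by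
  set s := n.primeFactors.filter (fun p => k ≤ n.factorization p) with hs
  have hsp : ∀ p ∈ s, p.Prime := fun p hp =>
    Nat.prime_of_mem_primeFactors (Finset.mem_filter.mp hp).1
  have h := prod_pow_factorization_eq' s hsp (n.factorization) q
  rw [← Nat.support_factorization, Finsupp.mem_support_iff] at hq
  show k ≤ (∏ p ∈ s, p ^ (n.factorization p)).factorization q
  rw [h]
  have hq' : (∏ p ∈ s, p ^ (n.factorization p)).factorization q ≠ 0 := hq
  rw [h] at hq'
  by_cases hqs : q ∈ s
  · rw [if_pos hqs]
    exact (Finset.mem_filter.mp hqs).2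
  · rw [if_neg hqs] at hq'; exact absurd rfl hq'

lemma exists_kfull_u (k : ℕ) (hk : 2 ≤ k) (m : ℕ) (hm : m ≠ 0)
    (hfull : ∀ p ∈ m.primeFactors, k ≤ m.factorization p) :
    ∃ u : ℕ, 1 ≤ u ∧ u ^ k ∣ m ∧ m ∣ u ^ (2 * k - 1) := by
  set u := ∏ p ∈ m.primeFactors, p ^ (m.factorization p / k) with hu
  have hsp : ∀ p ∈ m.primeFactors, p.Prime := fun p hp => Nat.prime_of_mem_primeFactors hp
  have hupos : 0 < u := Finset.prod_pos (fun p hp => pow_pos (hsp p hp).pos _)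
  have hufact : ∀ q, u.factorization q
      = if q ∈ m.primeFactors then m.factorization q / k else 0 :=
    fun q => prod_pow_factorization_eq' _ hsp _ q
  have hk0 : k ≠ 0 := by omega
  refine ⟨u, hupos, ?_, ?_⟩
  · rw [← Nat.factorization_le_iff_dvd (pow_ne_zero _ hupos.ne') hm]
    intro q
    rw [Nat.factorization_pow, Finsupp.smul_apply, smul_eq_mul, hufact q]
    by_cases hq : q ∈ m.primeFactors
    · rw [if_pos hq]; exact Nat.mul_div_le _ _
    · rw [if_neg hq]; simp
  · rw [← Nat.factorization_le_iff_dvd hm (pow_ne_zero _ hupos.ne')]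
    intro q
    rw [Nat.factorization_pow, Finsupp.smul_apply, smul_eq_mul, hufact q]
    by_cases hq : q ∈ m.primeFactors
    · rw [if_pos hq]
      have h1 : k ≤ m.factorization q := hfull q hq
      have h2 : 1 ≤ m.factorization q / k := Nat.one_le_div_iff (by omega) |>.mpr h1
      have h3 := Nat.div_add_mod (m.factorization q) k
      have h4 : m.factorization q % k < k := Nat.mod_lt _ (by omega)
      have h5 : 2 * k - 1 = k + (k - 1) := by omega
      rw [h5, add_mul]
      have h6 : m.factorization q % k ≤ (k-1) * (m.factorization q / k) := by
        calc m.factorization q % k ≤ k - 1 := by omega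
          _ = (k-1) * 1 := (mul_one _).symm
          _ ≤ (k-1) * (m.factorization q / k) := Nat.mul_le_mul_left _ h2
      omega
    · rw [if_neg hq]
      rw [← Nat.support_factorization, Finsupp.mem_support_iff] at hq
      push_neg at hq
      simp [hq]

lemma pt_small (ε : ℝ) (hε : 0 < ε) (e : ℕ) :
    (e + 1 : ℝ) ≤ (1 + 1/(ε * Real.log 2)) * (2:ℝ) ^ (ε * e) := by
  have hl2 : 0 < Real.log 2 := Real.log_pos (by norm_num)
  have hεl : 0 < ε * Real.log 2 := mul_pos hε hl2
  have h2 : (2:ℝ) ^ (ε * e) = Real.exp (Real.log 2 * (ε * e)) :=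
    Real.rpow_def_of_pos (by norm_num) _
  have hone : (1:ℝ) ≤ (2:ℝ) ^ (ε * e) :=
    Real.one_le_rpow (by norm_num) (by positivity)
  have hx : Real.log 2 * (ε * e) ≤ (2:ℝ) ^ (ε * e) := by
    rw [h2]
    have := Real.add_one_le_exp (Real.log 2 * (ε * e))
    linarith
  have he : (e : ℝ) ≤ (2:ℝ) ^ (ε * e) / (ε * Real.log 2) := by
    rw [le_div_iff₀ hεl]
    calc (e:ℝ) * (ε * Real.log 2) = Real.log 2 * (ε * e) := by ring
      _ ≤ _ := hx
  calc (e + 1 : ℝ) ≤ (2:ℝ) ^ (ε * e) / (ε * Real.log 2) + (2:ℝ) ^ (ε * e) := by linarith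
    _ = (1 + 1/(ε * Real.log 2)) * (2:ℝ) ^ (ε * e) := by field_simp; ring

lemma pt_large (ε : ℝ) (hε : 0 < ε) (p e : ℕ) (hp : (2:ℝ) ^ (1/ε) ≤ (p:ℝ)) :
    (e + 1 : ℝ) ≤ (p:ℝ) ^ (ε * e) := by
  have hp0 : (0:ℝ) < p := lt_of_lt_of_le (Real.rpow_pos_of_pos (by norm_num) _) hp
  have h2 : (2:ℝ) ≤ (p:ℝ) ^ ε := by
    calc (2:ℝ) = ((2:ℝ) ^ (1/ε)) ^ ε := by
          rw [← Real.rpow_mul (by norm_num), one_div_mul_cancel hε.ne', Real.rpow_one]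
      _ ≤ (p:ℝ) ^ ε := Real.rpow_le_rpow (Real.rpow_nonneg (by norm_num) _) hp hε.le
  have h3 : (p:ℝ) ^ (ε * e) = ((p:ℝ) ^ ε) ^ (e:ℕ) := by
    rw [← Real.rpow_natCast ((p:ℝ) ^ ε) e, ← Real.rpow_mul hp0.le]
  rw [h3]
  calc (e + 1 : ℝ) ≤ (2:ℝ) ^ (e:ℕ) := by
        exact_mod_cast Nat.succ_le_of_lt ((Nat.lt_two_pow_self (n := e)))
    _ ≤ ((p:ℝ) ^ ε) ^ (e:ℕ) := pow_le_pow_left₀ (by norm_num) h2 e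

lemma divisor_bound (ε : ℝ) (hε : 0 < ε) : ∃ c : ℝ, 1 ≤ c ∧ ∀ n : ℕ, n ≠ 0 →
    (n.divisors.card : ℝ) ≤ c * (n : ℝ) ^ ε := by
  have hl2 : 0 < Real.log 2 := Real.log_pos (by norm_num)
  set B : ℝ := 1 + 1/(ε * Real.log 2) with hB
  have hB1 : 1 ≤ B := by
    rw [hB]
    have : 0 < 1/(ε * Real.log 2) := by positivity
    linarith
  set N : ℕ := ⌈(2:ℝ) ^ (1/ε)⌉₊ with hN
  refine ⟨B ^ N, one_le_pow₀ hB1, fun n hn => ?_⟩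
  have hd : (n.divisors.card : ℝ) = ∏ p ∈ n.primeFactors, ((n.factorization p + 1 : ℕ) : ℝ) := by
    rw [Nat.card_divisors hn]
    push_cast
    rfl
  have hnε : (n:ℝ) ^ ε = ∏ p ∈ n.primeFactors, ((p:ℝ) ^ (ε * (n.factorization p))) := by
    have h1 : (n:ℝ) = ∏ p ∈ n.primeFactors, ((p:ℝ) ^ (n.factorization p : ℕ)) := by
      conv_lhs => rw [← Nat.factorization_prod_pow_eq_self hn]
      rw [Nat.prod_factorization_eq_prod_primeFactors]
      push_cast
      rfl
    rw [h1, ← Real.finset_prod_rpow _ _ (fun p _ => by positivity) ε]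
    refine Finset.prod_congr rfl (fun p hp => ?_)
    rw [← Real.rpow_natCast (p:ℝ) (n.factorization p), ← Real.rpow_mul (by positivity), mul_comm]
  have key : ∀ p ∈ n.primeFactors,
      ((n.factorization p + 1 : ℕ) : ℝ)
        ≤ (if p < N then B else 1) * ((p:ℝ) ^ (ε * (n.factorization p))) := by
    intro p hp
    have hp2 : 2 ≤ p := (Nat.prime_of_mem_primeFactors hp).two_le
    by_cases hpN : p < N
    · rw [if_pos hpN]
      push_cast
      calc ((n.factorization p : ℝ) + 1) ≤ B * (2:ℝ) ^ (ε * (n.factorization p)) :=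
            pt_small ε hε _
        _ ≤ B * (p:ℝ) ^ (ε * (n.factorization p)) := by
            refine mul_le_mul_of_nonneg_left ?_ (by linarith)
            exact Real.rpow_le_rpow (by norm_num) (by exact_mod_cast hp2) (by positivity)
    · rw [if_neg hpN, one_mul]
      push_cast
      refine pt_large ε hε p _ ?_
      calc (2:ℝ) ^ (1/ε) ≤ (N:ℝ) := Nat.le_ceil _
        _ ≤ (p:ℝ) := by exact_mod_cast Nat.le_of_not_lt hpN
  calc (n.divisors.card : ℝ)
      ≤ ∏ p ∈ n.primeFactors, ((if p < N then B else 1) * ((p:ℝ) ^ (ε * (n.factorization p)))) := by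
        rw [hd]
        exact Finset.prod_le_prod (fun p _ => by positivity) key
    _ = (∏ p ∈ n.primeFactors, (if p < N then B else 1)) * (n:ℝ) ^ ε := by
        rw [hnε, Finset.prod_mul_distrib]
    _ ≤ B ^ N * (n:ℝ) ^ ε := by
        refine mul_le_mul_of_nonneg_right ?_ (by positivity)
        calc (∏ p ∈ n.primeFactors, (if p < N then B else 1))
            = ∏ p ∈ n.primeFactors.filter (· < N), B := by
              rw [Finset.prod_ite, Finset.prod_const_one, mul_one]
          _ = B ^ (n.primeFactors.filter (· < N)).card := Finset.prod_const B
          _ ≤ B ^ N := by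
              refine pow_le_pow_right₀ (by linarith) ?_
              calc (n.primeFactors.filter (· < N)).card ≤ (Finset.range N).card :=
                    Finset.card_le_card
                      (fun p hp => Finset.mem_range.mpr (Finset.mem_filter.mp hp).2)
                _ = N := Finset.card_range N

lemma sum_rpow_bound (s : ℝ) (hs : 0 < s) : ∃ Z : ℝ, 0 < Z ∧ ∀ F : Finset ℕ,
    ∑ m ∈ F, (m:ℝ) ^ (-(1+s)) ≤ Z := by
  have hsum : Summable (fun n : ℕ => (n:ℝ) ^ (-(1+s))) :=
    Real.summable_nat_rpow.mpr (by linarith)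
  refine ⟨(∑' n : ℕ, (n:ℝ) ^ (-(1+s))) + 1, ?_, fun F => ?_⟩
  · have : 0 ≤ ∑' n : ℕ, (n:ℝ) ^ (-(1+s)) :=
      tsum_nonneg (fun n => Real.rpow_nonneg (Nat.cast_nonneg n) _)
    linarith
  · have h := Summable.sum_le_tsum F (fun i _ => Real.rpow_nonneg (Nat.cast_nonneg i) _) hsum
    linarith

theorem kfull_kernel_tail_bound (k : ℕ) (hk : 2 ≤ k) (a lam : ℕ → ℝ)
    (C ε : ℝ) (hC : 0 < C) (hε : 0 < ε)
    (ha0 : ∀ n : ℕ, 0 ≤ a n)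
    (haker : ∀ n : ℕ, 1 ≤ n → a n = a (kFullPart k n))
    (habd : ∀ n : ℕ, 1 ≤ n → a n ≤ C * (n : ℝ) ^ ε)
    (hlam : ∀ n : ℕ, 1 ≤ n → |lam n| ≤ (n.divisors.card : ℝ)) :
    ∃ C' : ℝ, 0 < C' ∧ ∀ x H : ℝ, 1 ≤ x → 1 ≤ H →
      |∑ n ∈ (Finset.Icc 1 ⌊x⌋₊).filter (fun n => H < (kFullPart k n : ℝ)),
          a n * (lam (n + 1)) ^ 4| ≤
        C' * x ^ (1 + 5 * ε) * H ^ ((1 : ℝ) / k - 1) := by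
  obtain ⟨c₁, hc₁, hc₁b⟩ := divisor_bound (3*ε/4) (by linarith)
  set d0 : ℝ := min ε (1/4) with hd0
  have hd0pos : 0 < d0 := lt_min hε (by norm_num)
  have hd0ε : d0 ≤ ε := min_le_left _ _
  have hd04 : d0 ≤ 1/4 := min_le_right _ _
  have hkR : (2:ℝ) ≤ (k:ℝ) := by exact_mod_cast hk
  have hkR0 : (0:ℝ) < k := by linarith
  obtain ⟨c₂, hc₂, hc₂b⟩ := divisor_bound (d0/k) (by positivity)
  obtain ⟨Z, hZ, hZb⟩ := sum_rpow_bound d0 hd0pos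
  set θ : ℝ := 1/(k:ℝ) + d0 with hθ
  have hθ0 : 0 < θ := by positivity
  have hθ1 : θ ≤ 1 := by
    have h1 : 1/(k:ℝ) ≤ 1/2 := by
      apply one_div_le_one_div_of_le <;> linarith
    rw [hθ]; linarith
  refine ⟨C * c₁^4 * (2:ℝ)^(3*ε) * c₂ * Z, by positivity, fun x H hx hH => ?_⟩
  have hx0 : (0:ℝ) < x := by linarith
  have hH0 : (0:ℝ) < H := by linarith
  set X := ⌊x⌋₊ with hX
  have hX1 : 1 ≤ X := Nat.le_floor (by exact_mod_cast hx)
  have hXx : (X:ℝ) ≤ x := Nat.floor_le hx0.le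
  set S := (Finset.Icc 1 X).filter (fun n => H < (kFullPart k n : ℝ)) with hS
  set M := (Finset.Icc 1 X).filter
    (fun m : ℕ => (∀ p ∈ m.primeFactors, k ≤ m.factorization p) ∧ H < (m:ℝ)) with hM
  set K1 : ℝ := C * c₁^4 * (2:ℝ)^(3*ε) * x^ε * x^(3*ε) with hK1
  have hK1pos : 0 < K1 := by rw [hK1]; positivity
  -- Step A : termwise bound
  have hterm : ∀ n ∈ S, |a n * (lam (n + 1)) ^ 4| ≤ K1 := by
    intro n hn
    obtain ⟨hnI, hnH⟩ := Finset.mem_filter.mp hn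
    obtain ⟨hn1, hnX⟩ := Finset.mem_Icc.mp hnI
    have hnx : (n:ℝ) ≤ x := le_trans (by exact_mod_cast hnX) hXx
    have h4 : 0 ≤ (lam (n+1))^4 := by positivity
    rw [abs_of_nonneg (mul_nonneg (ha0 n) h4)]
    have ha : a n ≤ C * x^ε := by
      calc a n ≤ C * (n:ℝ)^ε := habd n hn1
        _ ≤ C * x^ε := by
            refine mul_le_mul_of_nonneg_left ?_ hC.le
            exact Real.rpow_le_rpow (Nat.cast_nonneg n) hnx hε.le
    have hl : (lam (n+1))^4 ≤ c₁^4 * ((2:ℝ)^(3*ε) * x^(3*ε)) := by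
      have h1 : |lam (n+1)| ≤ ((n+1).divisors.card : ℝ) := hlam (n+1) (by omega)
      have h2 : ((n+1).divisors.card : ℝ) ≤ c₁ * ((n+1 : ℕ):ℝ)^(3*ε/4) :=
        hc₁b (n+1) (by omega)
      have h3 : (lam (n+1))^4 = |lam (n+1)|^4 := by
        rw [← abs_pow, abs_of_nonneg h4]
      rw [h3]
      calc |lam (n+1)|^4 ≤ (c₁ * ((n+1:ℕ):ℝ)^(3*ε/4))^4 :=
            pow_le_pow_left₀ (abs_nonneg _) (h1.trans h2) 4
        _ = c₁^4 * ((n+1:ℕ):ℝ)^(3*ε) := by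
            rw [mul_pow, ← Real.rpow_natCast (((n+1:ℕ):ℝ)^(3*ε/4)) 4,
              ← Real.rpow_mul (Nat.cast_nonneg _)]
            norm_num
        _ ≤ c₁^4 * (2*x)^(3*ε) := by
            refine mul_le_mul_of_nonneg_left ?_ (by positivity)
            refine Real.rpow_le_rpow (Nat.cast_nonneg _) ?_ (by positivity)
            push_cast
            have : (n:ℝ) ≤ x := hnx
            linarith
        _ = c₁^4 * ((2:ℝ)^(3*ε) * x^(3*ε)) := by
            rw [Real.mul_rpow (by norm_num) hx0.le]
    calc a n * (lam (n+1))^4 ≤ (C * x^ε) * (c₁^4 * ((2:ℝ)^(3*ε) * x^(3*ε))) := by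
          refine mul_le_mul ha hl h4 (by positivity)
      _ = K1 := by rw [hK1]; ring
  -- Step B : card bound
  have hSsub : S ⊆ M.biUnion (fun m => (Finset.Icc 1 X).filter (fun n : ℕ => m ∣ n)) := by
    intro n hn
    obtain ⟨hnI, hnH⟩ := Finset.mem_filter.mp hn
    obtain ⟨hn1, hnX⟩ := Finset.mem_Icc.mp hnI
    have hn0 : n ≠ 0 := by omega
    have hmd : kFullPart k n ∣ n := kFullPart_dvd k n hn0
    refine Finset.mem_biUnion.mpr ⟨kFullPart k n, ?_, ?_⟩
    · refine Finset.mem_filter.mpr ⟨Finset.mem_Icc.mpr ⟨kFullPart_pos k n, ?_⟩, ?_, hnH⟩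
      · exact le_trans (Nat.le_of_dvd (by omega) hmd) hnX
      · exact fun p hp => kFullPart_isKFull k n p hp
    · exact Finset.mem_filter.mpr ⟨hnI, hmd⟩
  have hcard : (S.card : ℝ) ≤ ∑ m ∈ M, ((X / m : ℕ) : ℝ) := by
    have h : S.card ≤ ∑ m ∈ M, X / m := by
      calc S.card ≤ (M.biUnion (fun m => (Finset.Icc 1 X).filter (fun n : ℕ => m ∣ n))).card :=
            Finset.card_le_card hSsub
        _ ≤ ∑ m ∈ M, ((Finset.Icc 1 X).filter (fun n : ℕ => m ∣ n)).card :=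
            Finset.card_biUnion_le
        _ = ∑ m ∈ M, X / m := by
            refine Finset.sum_congr rfl (fun m hm => ?_)
            rw [show Finset.Icc 1 X = Finset.Ioc 0 X from rfl]
            exact Nat.Ioc_filter_dvd_card_eq_div X m
    calc (S.card : ℝ) ≤ ((∑ m ∈ M, X / m : ℕ) : ℝ) := by exact_mod_cast h
      _ = ∑ m ∈ M, ((X / m : ℕ) : ℝ) := by push_cast; rfl
  -- Step C : per-m bound
  have hstep : ∀ m ∈ M, ((X / m : ℕ) : ℝ) ≤
      (x * (H^((1:ℝ)/k - 1) * x^ε)) * (m:ℝ)^(-θ) := by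
    intro m hm
    obtain ⟨hmI, hmfull, hmH⟩ := Finset.mem_filter.mp hm
    obtain ⟨hm1, hmX⟩ := Finset.mem_Icc.mp hmI
    have hm0 : (0:ℝ) < m := by exact_mod_cast hm1
    have hmx : (m:ℝ) ≤ x := le_trans (by exact_mod_cast hmX) hXx
    have hHx : H ≤ x := le_trans hmH.le hmx
    calc ((X / m : ℕ) : ℝ) ≤ (X:ℝ) / m := Nat.cast_div_le
      _ ≤ x / m := by gcongr
      _ = x * (m:ℝ)^(-1:ℝ) := by rw [Real.rpow_neg_one]; ring
      _ = x * ((m:ℝ)^(θ-1) * (m:ℝ)^(-θ)) := by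
          rw [← Real.rpow_add hm0, show θ - 1 + -θ = (-1:ℝ) from by ring]
      _ ≤ x * ((H^((1:ℝ)/k - 1) * x^ε) * (m:ℝ)^(-θ)) := by
          refine mul_le_mul_of_nonneg_left ?_ hx0.le
          refine mul_le_mul_of_nonneg_right ?_ (Real.rpow_nonneg hm0.le _)
          calc (m:ℝ)^(θ-1) ≤ H^(θ-1) :=
                Real.rpow_le_rpow_of_nonpos hH0 hmH.le (by linarith)
            _ = H^((1:ℝ)/k - 1) * H^d0 := by
                rw [← Real.rpow_add hH0, hθ]; ring_nf
            _ ≤ H^((1:ℝ)/k - 1) * x^ε := by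
                refine mul_le_mul_of_nonneg_left ?_ (Real.rpow_nonneg hH0.le _)
                calc H^d0 ≤ x^d0 := Real.rpow_le_rpow hH0.le hHx hd0pos.le
                  _ ≤ x^ε := Real.rpow_le_rpow_of_exponent_le hx hd0ε
      _ = (x * (H^((1:ℝ)/k - 1) * x^ε)) * (m:ℝ)^(-θ) := by ring
  -- Step D : sum over M of m^(-θ)
  have hsum4 : ∑ m ∈ M, (m:ℝ)^(-θ) ≤ c₂ * Z := by
    set uof : ℕ → ℕ := fun m =>
      if h : ∃ u : ℕ, 1 ≤ u ∧ u^k ∣ m ∧ m ∣ u^(2*k-1) then h.choose else 1 with huof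
    have huspec : ∀ m ∈ M, 1 ≤ uof m ∧ (uof m)^k ∣ m ∧ m ∣ (uof m)^(2*k-1) := by
      intro m hm
      obtain ⟨hmI, hmfull, hmH⟩ := Finset.mem_filter.mp hm
      obtain ⟨hm1, hmX⟩ := Finset.mem_Icc.mp hmI
      have hex : ∃ u : ℕ, 1 ≤ u ∧ u^k ∣ m ∧ m ∣ u^(2*k-1) :=
        exists_kfull_u k hk m (by omega) hmfull
      rw [huof]
      simp only [dif_pos hex]
      exact hex.choose_spec
    set φ : ℕ → ℕ × ℕ := fun m => (uof m, m / (uof m)^k) with hφ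
    have hrec : ∀ m ∈ M, m = (uof m)^k * (φ m).2 := by
      intro m hm
      exact (Nat.mul_div_cancel' (huspec m hm).2.1).symm
    set G : ℕ × ℕ → ℝ := fun p => (p.1:ℝ)^(-((k:ℝ)*θ)) * (p.2:ℝ)^(-θ) with hG
    have hGnonneg : ∀ p : ℕ × ℕ, 0 ≤ G p := by
      intro p
      exact mul_nonneg (Real.rpow_nonneg (Nat.cast_nonneg _) _)
        (Real.rpow_nonneg (Nat.cast_nonneg _) _)
    have hGeq : ∀ m ∈ M, (m:ℝ)^(-θ) = G (φ m) := by
      intro m hm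
      have hu1 := (huspec m hm).1
      conv_lhs => rw [hrec m hm]
      rw [hG]
      have hc : (((uof m)^k * (φ m).2 : ℕ) : ℝ) = ((uof m : ℝ))^(k:ℕ) * ((φ m).2 : ℝ) := by
        push_cast; ring
      rw [hc, Real.mul_rpow (by positivity) (Nat.cast_nonneg _),
        ← Real.rpow_natCast ((uof m : ℝ)) k, ← Real.rpow_mul (Nat.cast_nonneg _)]
      simp only []
      congr 1
      show _ = ((uof m : ℕ) : ℝ) ^ (-((k:ℝ)*θ))
      ring
    set B := (Finset.Icc 1 X).biUnion
      (fun u => ((u^(k-1)).divisors).image (fun v => (u, v))) with hB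
    have himg : M.image φ ⊆ B := by
      intro p hp
      obtain ⟨m, hm, hpm⟩ := Finset.mem_image.mp hp
      obtain ⟨hu1, huk, hum⟩ := huspec m hm
      obtain ⟨hmI, hmfull, hmH⟩ := Finset.mem_filter.mp hm
      obtain ⟨hm1, hmX⟩ := Finset.mem_Icc.mp hmI
      have hu0 : uof m ≠ 0 := by omega
      have huX : uof m ≤ X := by
        calc uof m ≤ (uof m)^k := Nat.le_self_pow (by omega) _
          _ ≤ m := Nat.le_of_dvd (by omega) huk
          _ ≤ X := hmX
      have hvd : m / (uof m)^k ∣ (uof m)^(k-1) := by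
        have h2k : (uof m)^(2*k-1) = (uof m)^(k-1) * (uof m)^k := by
          rw [← pow_add]
          congr 1
          omega
        have hmd : m / (uof m)^k * (uof m)^k ∣ (uof m)^(k-1) * (uof m)^k := by
          rw [Nat.div_mul_cancel huk, ← h2k]
          exact hum
        exact (Nat.mul_dvd_mul_iff_right (Nat.pos_of_ne_zero (pow_ne_zero k hu0))).mp hmd
      refine Finset.mem_biUnion.mpr ⟨uof m, Finset.mem_Icc.mpr ⟨hu1, huX⟩, ?_⟩
      refine Finset.mem_image.mpr ⟨m / (uof m)^k, ?_, by rw [← hpm]⟩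
      exact Nat.mem_divisors.mpr ⟨hvd, pow_ne_zero _ hu0⟩
    have hinj : Set.InjOn φ M := by
      intro m hm m' hm' heq
      have h1 := hrec m (by exact_mod_cast hm)
      have h2 := hrec m' (by exact_mod_cast hm')
      have hfst : uof m = uof m' := congrArg Prod.fst heq
      have hsnd : (φ m).2 = (φ m').2 := congrArg Prod.snd heq
      rw [h1, h2, hfst, hsnd]
    have hdisj : Set.PairwiseDisjoint ((Finset.Icc 1 X : Finset ℕ) : Set ℕ)
        (fun u : ℕ => ((u^(k-1)).divisors).image (fun v => (u, v))) := by
      intro u _ u' _ hne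
      refine Finset.disjoint_left.mpr (fun p hp hp' => ?_)
      obtain ⟨v, _, hpv⟩ := Finset.mem_image.mp hp
      obtain ⟨v', _, hpv'⟩ := Finset.mem_image.mp hp'
      exact hne ((congrArg Prod.fst hpv).trans (congrArg Prod.fst hpv').symm)
    calc ∑ m ∈ M, (m:ℝ)^(-θ) = ∑ m ∈ M, G (φ m) := Finset.sum_congr rfl hGeq
      _ = ∑ p ∈ M.image φ, G p := (Finset.sum_image (fun m hm m' hm' h => hinj hm hm' h)).symm
      _ ≤ ∑ p ∈ B, G p :=
          Finset.sum_le_sum_of_subset_of_nonneg himg (fun p _ _ => hGnonneg p)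
      _ = ∑ u ∈ Finset.Icc 1 X, ∑ p ∈ ((u^(k-1)).divisors).image (fun v => (u, v)), G p :=
          Finset.sum_biUnion hdisj
      _ = ∑ u ∈ Finset.Icc 1 X, ∑ v ∈ (u^(k-1)).divisors, G (u, v) := by
          refine Finset.sum_congr rfl (fun u hu => ?_)
          exact Finset.sum_image (fun v _ v' _ h => (Prod.mk.injEq _ _ _ _).mp h |>.2)
      _ ≤ ∑ u ∈ Finset.Icc 1 X, c₂ * (u:ℝ)^(-(1+d0)) := by
          refine Finset.sum_le_sum (fun u hu => ?_)
          obtain ⟨hu1, huX⟩ := Finset.mem_Icc.mp hu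
          have hu0 : (0:ℝ) < u := by exact_mod_cast hu1
          have hu1R : (1:ℝ) ≤ u := by exact_mod_cast hu1
          calc ∑ v ∈ (u^(k-1)).divisors, G (u, v)
              ≤ ∑ v ∈ (u^(k-1)).divisors, (u:ℝ)^(-((k:ℝ)*θ)) := by
                refine Finset.sum_le_sum (fun v hv => ?_)
                rw [hG]
                have hv1 : (1:ℝ) ≤ v := by
                  exact_mod_cast Nat.pos_of_mem_divisors hv
                calc (u:ℝ)^(-((k:ℝ)*θ)) * (v:ℝ)^(-θ)
                    ≤ (u:ℝ)^(-((k:ℝ)*θ)) * 1 := by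
                      refine mul_le_mul_of_nonneg_left ?_ (Real.rpow_nonneg hu0.le _)
                      exact Real.rpow_le_one_of_one_le_of_nonpos hv1 (by linarith)
                  _ = (u:ℝ)^(-((k:ℝ)*θ)) := mul_one _
            _ = ((u^(k-1)).divisors.card : ℝ) * (u:ℝ)^(-((k:ℝ)*θ)) := by
                rw [Finset.sum_const, nsmul_eq_mul]
            _ ≤ (c₂ * ((u^(k-1) : ℕ):ℝ)^(d0/k)) * (u:ℝ)^(-((k:ℝ)*θ)) := by
                refine mul_le_mul_of_nonneg_right ?_ (Real.rpow_nonneg hu0.le _)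
                exact hc₂b _ (pow_ne_zero _ (by omega))
            _ ≤ c₂ * (u:ℝ)^(-(1+d0)) := by
                have he1 : ((u^(k-1) : ℕ):ℝ)^(d0/k) = (u:ℝ)^(((k:ℝ)-1) * (d0/k)) := by
                  have : ((u^(k-1) : ℕ):ℝ) = (u:ℝ)^((k-1 : ℕ):ℝ) := by
                    push_cast
                    rw [Real.rpow_natCast]
                  rw [this, ← Real.rpow_mul hu0.le]
                  congr 1
                  have : ((k-1 : ℕ):ℝ) = (k:ℝ) - 1 := by
                    have : (1:ℕ) ≤ k := by omega
                    push_cast [Nat.cast_sub this]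
                    ring
                  rw [this]
                rw [he1, mul_assoc, ← Real.rpow_add hu0]
                refine mul_le_mul_of_nonneg_left ?_ (by linarith)
                refine Real.rpow_le_rpow_of_exponent_le hu1R ?_
                have hkθ : (k:ℝ)*θ = 1 + (k:ℝ)*d0 := by
                  rw [hθ]
                  field_simp
                have hdd : ((k:ℝ)-1) * (d0/k) ≤ ((k:ℝ)-1) * d0 := by
                  refine mul_le_mul_of_nonneg_left ?_ (by linarith)
                  exact div_le_self hd0pos.le (by linarith)
                have hkne : (k:ℝ) ≠ 0 := by linarith
                have e1 : ((k:ℝ)-1) * (d0/(k:ℝ)) = d0 - d0/(k:ℝ) := by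
                  field_simp
                have e3 : 0 ≤ d0/(k:ℝ) := by positivity
                have e4 : 2*d0 ≤ (k:ℝ)*d0 := by nlinarith [hd0pos.le, hkR]
                rw [hkθ]
                linarith [e1, e3, e4]
      _ = c₂ * ∑ u ∈ Finset.Icc 1 X, (u:ℝ)^(-(1+d0)) := by rw [Finset.mul_sum]
      _ ≤ c₂ * Z := by
          refine mul_le_mul_of_nonneg_left (hZb _) (by linarith)
  -- Assemble
  have hfinal : |∑ n ∈ S, a n * (lam (n + 1)) ^ 4|
      ≤ K1 * ((x * (H^((1:ℝ)/k - 1) * x^ε)) * (c₂ * Z)) := by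
    calc |∑ n ∈ S, a n * (lam (n + 1)) ^ 4| ≤ ∑ n ∈ S, |a n * (lam (n + 1)) ^ 4| :=
          Finset.abs_sum_le_sum_abs _ _
      _ ≤ S.card • K1 := Finset.sum_le_card_nsmul S _ K1 hterm
      _ = (S.card : ℝ) * K1 := nsmul_eq_mul _ _
      _ ≤ (∑ m ∈ M, ((X / m : ℕ) : ℝ)) * K1 := by
          refine mul_le_mul_of_nonneg_right hcard hK1pos.le
      _ ≤ ((x * (H^((1:ℝ)/k - 1) * x^ε)) * ∑ m ∈ M, (m:ℝ)^(-θ)) * K1 := by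
          refine mul_le_mul_of_nonneg_right ?_ hK1pos.le
          rw [Finset.mul_sum]
          exact Finset.sum_le_sum hstep
      _ ≤ ((x * (H^((1:ℝ)/k - 1) * x^ε)) * (c₂ * Z)) * K1 := by
          refine mul_le_mul_of_nonneg_right ?_ hK1pos.le
          refine mul_le_mul_of_nonneg_left hsum4 (by positivity)
      _ = K1 * ((x * (H^((1:ℝ)/k - 1) * x^ε)) * (c₂ * Z)) := by ring
  have hxpow : x * x^ε * x^(3*ε) * x^ε = x^(1 + 5*ε) := by
    rw [show (1 + 5*ε) = 1 + (ε + (3*ε + ε)) by ring, Real.rpow_add hx0,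
      Real.rpow_add hx0, Real.rpow_add hx0, Real.rpow_one]
    ring
  calc |∑ n ∈ S, a n * (lam (n + 1)) ^ 4|
      ≤ K1 * ((x * (H^((1:ℝ)/k - 1) * x^ε)) * (c₂ * Z)) := hfinal
    _ = (C * c₁^4 * (2:ℝ)^(3*ε) * c₂ * Z) * (x * x^ε * x^(3*ε) * x^ε) * H^((1:ℝ)/k - 1) := by
        rw [hK1]; ring
    _ = (C * c₁^4 * (2:ℝ)^(3*ε) * c₂ * Z) * x^(1 + 5*ε) * H^((1:ℝ)/k - 1) := by
        rw [hxpow]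
end
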